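/- arXiv:math/0512623 — 5 statements merged into one kernel-verified Lean document; each statement's English description precedes it below -/
import Mathlib

section
/- The following q-series identity holds as formal power series: the product over n ≥ 1 with n not congruent to 0, ±12 mod 27 of 1/(1-q^n), minus q times the product over n ≥ 1 with n not congruent to 0, ±6 mod 27 of 1/(1-q^n), minus q^2 times the product over n ≥ 1 with n not congruent to 0, ±3 mod 27 of 1/(1-q^n), equals 1. -/
open PowerSeries

/-- The infinite product `∏_{n ≥ 1} f n` of power series, where the `n`-th factor
is `1 + O(q^n)`: its `N`-th coefficient is the `N`-th coefficient of any
sufficiently long partial product. -/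
noncomputable def seriesProd (f : ℕ → PowerSeries ℤ) : PowerSeries ℤ :=
  PowerSeries.mk fun N => coeff (R := ℤ) N (∏ n ∈ Finset.range (N + 1), f n)

/-- `∏_{n ≥ 1, n ≢ 0, ±a (mod 27)} 1/(1 - q^n)` as a formal power series in `ℤ⟦q⟧`. -/
noncomputable def AG (a : ℕ) : PowerSeries ℤ :=
  seriesProd fun n =>
    if (n + 1) % 27 = 0 ∨ (n + 1) % 27 = a % 27 ∨ (n + 1 + a) % 27 = 0 then 1
    else PowerSeries.invOfUnit (1 - X ^ (n + 1)) 1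

/-!
Multiply by `E = ∏_{n ≥ 1} (1 - qⁿ)`. Then `E · AG a = ∏_{n ≡ 0, ±a (27)} (1 - qⁿ)`, which by the
Jacobi triple product is `θ(27, b) = ∑_{k ∈ ℤ} (-1)^k q^(27 k(k-1)/2 + b k)` for `b ≡ ±a`; in the
same way `E = θ(3, 1)` (Euler). Sorting `k` by its residue mod 3 gives
`θ(3, 1) = θ(27, 12) - q θ(27, 21) - q² θ(27, 3)`, that is `E · (AG 12 - q AG 6 - q² AG 3) = E`.

The triple product is proved coefficientwise from its finite form
`x^(C(n,2) + n²) ∏_{j<n} (1 - xʲ t)(t - x^(j+1)) = ∑_k (-1)^(n+k) x^(C(k,2) + n(2n-k)) [2n, k]_x tᵏ`,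
which is Cauchy's q-binomial theorem for `∏_{i<2n} (xⁿ - xⁱ t)`, and from the congruence
`[2n, k]_x ∏_{i<n} (1 - x^(i+1)) ≡ 1 mod x^(min(k, 2n-k) + 1)`: for `x = q^M`, `t = q^b` and
`n > 2N`, the coefficient of `q^N` only sees the leading monomial of each summand.
-/

open Finset

section Congruence

variable {R : Type*} [CommRing R]

theorem sModEq_span_X_pow_iff {f g : R⟦X⟧} {e : ℕ} :
    f ≡ g [SMOD Ideal.span {(X : R⟦X⟧) ^ e}] ↔ ∀ d < e, coeff d f = coeff d g := by
  simp only [SModEq.sub_mem, Ideal.mem_span_singleton, X_pow_dvd_iff, map_sub, sub_eq_zero]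

theorem one_sub_pow_sModEq_one (x : R) {e e' : ℕ} (h : e' ≤ e) :
    1 - x ^ e ≡ 1 [SMOD Ideal.span {x ^ e'}] := by
  rw [SModEq.sub_mem, sub_sub_cancel_left, neg_mem_iff, Ideal.mem_span_singleton]
  exact pow_dvd_pow x h

theorem prod_sModEq_one {ι : Type*} {s : Finset ι} {f : ι → R} {I : Ideal R}
    (h : ∀ i ∈ s, f i ≡ 1 [SMOD I]) : ∏ i ∈ s, f i ≡ 1 [SMOD I] := by
  simpa using SModEq.prod h

theorem coeff_X_pow_mul_of_sModEq_one {G : R⟦X⟧} {e d m : ℕ}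
    (hG : G ≡ 1 [SMOD Ideal.span {(X : R⟦X⟧) ^ m}]) (hm : e ≤ d → d - e < m) :
    coeff d (X ^ e * G) = if e = d then 1 else 0 := by
  rw [coeff_X_pow_mul']
  by_cases hed : e ≤ d
  · rw [if_pos hed, sModEq_span_X_pow_iff.mp hG _ (hm hed), coeff_one]
    exact if_congr (by omega) rfl rfl
  · rw [if_neg hed, if_neg (by omega)]

end Congruence

section SeriesProd

variable {f g : ℕ → ℤ⟦X⟧}

theorem seriesProd_sModEq_prod
    (hf : ∀ n, f n ≡ 1 [SMOD Ideal.span {(X : ℤ⟦X⟧) ^ (n + 1)}]) {e m : ℕ}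
    (hem : e ≤ m) :
    seriesProd f ≡ ∏ n ∈ range m, f n [SMOD Ideal.span {(X : ℤ⟦X⟧) ^ e}] := by
  refine sModEq_span_X_pow_iff.mpr fun d hd => ?_
  have htail : ∏ n ∈ Ico (d + 1) m, f n ≡ 1 [SMOD Ideal.span {(X : ℤ⟦X⟧) ^ (d + 1)}] :=
    prod_sModEq_one fun n hn => (hf n).mono <| Ideal.span_singleton_le_span_singleton.mpr <|
      pow_dvd_pow X (by simp at hn; omega)
  rw [seriesProd, coeff_mk, ← prod_range_mul_prod_Ico f (show d + 1 ≤ m by omega)]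
  simpa using sModEq_span_X_pow_iff.mp
    ((SModEq.refl (∏ n ∈ range (d + 1), f n)).mul htail.symm) d d.lt_succ_self

theorem seriesProd_mul (hf : ∀ n, f n ≡ 1 [SMOD Ideal.span {(X : ℤ⟦X⟧) ^ (n + 1)}])
    (hg : ∀ n, g n ≡ 1 [SMOD Ideal.span {(X : ℤ⟦X⟧) ^ (n + 1)}]) :
    seriesProd f * seriesProd g = seriesProd fun n => f n * g n := by
  have hfg : ∀ n, f n * g n ≡ 1 [SMOD Ideal.span {(X : ℤ⟦X⟧) ^ (n + 1)}] := fun n => by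
    simpa using (hf n).mul (hg n)
  ext N
  have h := (seriesProd_sModEq_prod hf (le_refl (N + 1))).mul (seriesProd_sModEq_prod hg le_rfl)
  rw [← prod_mul_distrib] at h
  exact sModEq_span_X_pow_iff.mp (h.trans (seriesProd_sModEq_prod hfg (le_refl (N + 1))).symm) N
    (Nat.lt_succ_self N)

end SeriesProd

section GaussianBinomial

variable {R : Type*} [CommRing R]

def qBinom (x : R) : ℕ → ℕ → R
  | _, 0 => 1
  | 0, _ + 1 => 0
  | m + 1, k + 1 => qBinom x m k + x ^ (k + 1) * qBinom x m (k + 1)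

variable (x : R)

@[simp] theorem qBinom_zero_right (m : ℕ) : qBinom x m 0 = 1 := by cases m <;> rfl

theorem qBinom_succ_succ (m k : ℕ) :
    qBinom x (m + 1) (k + 1) = qBinom x m k + x ^ (k + 1) * qBinom x m (k + 1) := rfl

theorem qBinom_eq_zero_of_lt : ∀ {m k : ℕ}, m < k → qBinom x m k = 0
  | 0, _ + 1, _ => rfl
  | m + 1, k + 1, h => by
    rw [qBinom_succ_succ, qBinom_eq_zero_of_lt (by omega), qBinom_eq_zero_of_lt (by omega),
      mul_zero, add_zero]

@[simp] theorem qBinom_self : ∀ m : ℕ, qBinom x m m = 1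
  | 0 => rfl
  | m + 1 => by rw [qBinom_succ_succ, qBinom_self m, qBinom_eq_zero_of_lt x m.lt_succ_self,
      mul_zero, add_zero]

theorem qBinom_succ_one (a : ℕ) : qBinom x (a + 1) 1 = x ^ a + qBinom x a 1 := by
  induction a with
  | zero => simp [qBinom_eq_zero_of_lt]
  | succ a ih =>
    have h₁ : qBinom x (a + 1 + 1) 1 = 1 + x * qBinom x (a + 1) 1 := by simp [qBinom_succ_succ]
    have h₂ : qBinom x (a + 1) 1 = 1 + x * qBinom x a 1 := by simp [qBinom_succ_succ]
    linear_combination h₁ + x * ih - h₂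

theorem qBinom_succ_succ' : ∀ a k : ℕ,
    qBinom x (a + k + 1) (k + 1) = x ^ a * qBinom x (a + k) k + qBinom x (a + k) (k + 1)
  | a, 0 => by simpa using qBinom_succ_one x a
  | 0, k + 1 => by simp [qBinom_eq_zero_of_lt]
  | a + 1, k + 1 => by
    have h₁ := qBinom_succ_succ' (a + 1) k
    have h₂ := qBinom_succ_succ' a (k + 1)
    simp only [← add_assoc, add_right_comm a 1 k] at h₁ h₂ ⊢
    linear_combination qBinom_succ_succ x (a + k + 1 + 1) (k + 1) + h₁
      - x ^ (a + 1) * qBinom_succ_succ x (a + k + 1) k + x ^ (k + 1 + 1) * h₂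
      - qBinom_succ_succ x (a + k + 1) (k + 1)

theorem qBinom_symm_add : ∀ a b : ℕ, qBinom x (a + b) a = qBinom x (a + b) b
  | 0, b => by simp
  | a + 1, 0 => by simp
  | a + 1, b + 1 => by
    have h₁ := qBinom_symm_add a (b + 1)
    have h₂ := qBinom_symm_add (a + 1) b
    have h₃ := qBinom_succ_succ' x (a + 1) b
    simp only [← add_assoc, add_right_comm a 1 b] at h₁ h₂ h₃ ⊢
    linear_combination qBinom_succ_succ x (a + b + 1) a + h₁ + x ^ (a + 1) * h₂ - h₃

theorem one_sub_pow_mul_qBinom (a k : ℕ) :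
    (1 - x ^ (k + 1)) * qBinom x (a + k + 1) (k + 1) =
      (1 - x ^ (a + k + 1)) * qBinom x (a + k) k := by
  linear_combination qBinom_succ_succ x (a + k) k - x ^ (k + 1) * qBinom_succ_succ' x a k

theorem qBinom_mul_prod_one_sub_pow (a k : ℕ) :
    qBinom x (a + k) k * ∏ i ∈ range k, (1 - x ^ (i + 1)) =
      ∏ i ∈ range k, (1 - x ^ (a + i + 1)) := by
  induction k with
  | zero => simp
  | succ k ih =>
    rw [prod_range_succ, prod_range_succ, ← ih, ← add_assoc]
    linear_combination (∏ i ∈ range k, (1 - x ^ (i + 1))) * one_sub_pow_mul_qBinom x a k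

theorem prod_add_pow_mul_eq_sum (s t : R) (m : ℕ) :
    ∏ i ∈ range m, (s + x ^ i * t) =
      ∑ k ∈ range (m + 1), x ^ k.choose 2 * qBinom x m k * s ^ (m - k) * t ^ k := by
  induction m generalizing t with
  | zero => simp
  | succ m ih =>
    set u : ℕ → R := fun k => x ^ (k.choose 2 + k) * qBinom x m k * s ^ (m + 1 - k) * t ^ k
      with hu_def
    have hu : ∑ k ∈ range (m + 1), u (k + 1) + u 0 = ∑ k ∈ range (m + 1), u k := by
      rw [← sum_range_succ', sum_range_succ, add_eq_left]
      simp [u, qBinom_eq_zero_of_lt]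
    calc ∏ i ∈ range (m + 1), (s + x ^ i * t)
        = (∑ k ∈ range (m + 1), x ^ k.choose 2 * qBinom x m k * s ^ (m - k) * (x * t) ^ k)
            * (s + t) := by
          rw [prod_range_succ', ← ih]
          simp only [pow_succ, pow_zero, one_mul, mul_assoc]
      _ = ∑ k ∈ range (m + 1), (x ^ (k + 1).choose 2 * qBinom x m k * s ^ (m - k) * t ^ (k + 1)
            + u (k + 1)) + u 0 := by
          rw [sum_add_distrib, add_assoc, hu, sum_mul, ← sum_add_distrib]
          refine sum_congr rfl fun k hk => ?_
          simp only [hu_def]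
          rw [Nat.choose_succ_succ', Nat.choose_one_right,
            show m + 1 - k = m - k + 1 by have := mem_range.mp hk; omega]
          ring
      _ = ∑ k ∈ range (m + 1 + 1),
            x ^ k.choose 2 * qBinom x (m + 1) k * s ^ (m + 1 - k) * t ^ k := by
          rw [sum_range_succ' _ (m + 1)]
          congr 1
          · refine sum_congr rfl fun k _ => ?_
            simp only [hu_def]
            rw [qBinom_succ_succ, Nat.add_sub_add_right]
            ring
          · simp [hu_def]

end GaussianBinomial

section FiniteJacobi

variable {R : Type*} [CommRing R] (x : R)

theorem prod_sub_pow_mul_eq (t : R) (n : ℕ) :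
    ∏ i ∈ range (2 * n), (x ^ n - x ^ i * t) =
      (-1) ^ n * x ^ (n.choose 2 + n * n) *
        ∏ j ∈ range n, ((1 - x ^ j * t) * (t - x ^ (j + 1))) :=
  calc ∏ i ∈ range (2 * n), (x ^ n - x ^ i * t)
      = ∏ j ∈ range n, ((x ^ n - x ^ (n - 1 - j) * t) * (x ^ n - x ^ (n + j) * t)) := by
        rw [two_mul, prod_range_add, ← prod_range_reflect _ n, prod_mul_distrib]
    _ = ∏ j ∈ range n,
          (-1 * x ^ (n - 1 - j) * x ^ n * ((1 - x ^ j * t) * (t - x ^ (j + 1)))) := by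
        refine prod_congr rfl fun j hj => ?_
        have hx : x ^ n = x ^ (n - 1 - j) * x ^ (j + 1) := by
          rw [← pow_add]; congr 1; have := mem_range.mp hj; omega
        linear_combination (x ^ n - x ^ (n + j) * t) * hx
    _ = _ := by
        rw [prod_mul_distrib, prod_mul_distrib, prod_mul_distrib, prod_const, prod_const,
          card_range, prod_range_reflect (x ^ ·) n, prod_pow_eq_pow_sum, sum_range_id,
          ← Nat.choose_two_right]
        ring

theorem prod_one_sub_mul_sub_eq_sum (t : R) (n : ℕ) :
    x ^ (n.choose 2 + n * n) * ∏ j ∈ range n, ((1 - x ^ j * t) * (t - x ^ (j + 1))) =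
      ∑ k ∈ range (2 * n + 1),
        (-1) ^ (n + k) * x ^ (k.choose 2 + n * (2 * n - k)) * qBinom x (2 * n) k * t ^ k := by
  have h := prod_add_pow_mul_eq_sum x (x ^ n) (-t) (2 * n)
  simp only [mul_neg, ← sub_eq_add_neg, prod_sub_pow_mul_eq] at h
  calc _ = (-1) ^ n * ((-1) ^ n * x ^ (n.choose 2 + n * n)
          * ∏ j ∈ range n, ((1 - x ^ j * t) * (t - x ^ (j + 1)))) := by
        rw [← mul_assoc, ← mul_assoc, ← pow_add, ← two_mul, pow_mul, neg_one_sq, one_pow,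
          one_mul]
    _ = _ := by
        rw [h, mul_sum]
        refine sum_congr rfl fun k _ => ?_
        ring

theorem qBinom_mul_prod_sModEq_one {n k : ℕ} (hk : k ≤ 2 * n) :
    qBinom x (2 * n) k * ∏ i ∈ range n, (1 - x ^ (i + 1)) ≡ 1
      [SMOD Ideal.span {x ^ (min k (2 * n - k) + 1)}] := by
  wlog hkn : k ≤ n generalizing k with H
  · have h := H (k := 2 * n - k) (by omega) (by omega)
    have hsymm := qBinom_symm_add x (2 * n - k) k
    rw [Nat.sub_add_cancel hk] at hsymm
    rwa [show 2 * n - (2 * n - k) = k by omega, min_comm, hsymm] at h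
  have hsplit := prod_range_add (fun i => 1 - x ^ (i + 1)) k (n - k)
  rw [Nat.add_sub_cancel' hkn] at hsplit
  rw [min_eq_left (by omega), hsplit, ← mul_assoc, ← Nat.sub_add_cancel hk,
    qBinom_mul_prod_one_sub_pow]
  have h := (prod_sModEq_one fun i (_ : i ∈ range k) =>
      one_sub_pow_sModEq_one x (e := 2 * n - k + i + 1) (e' := k + 1) (by omega)).mul
    (prod_sModEq_one fun i (_ : i ∈ range (n - k)) =>
      one_sub_pow_sModEq_one x (e := k + i + 1) (e' := k + 1) (by omega))
  rwa [one_mul] at h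

end FiniteJacobi

section ThetaSeries

/-- `∑_{k ∈ ℤ} (-1)^k q^(M k(k-1)/2 + b k)`. For `0 < b < M` each `k` contributing to `q^N`
has `|k| ≤ N` (`two_mul_abs_le_theta_exponent`), so the window `[-N, N]` loses nothing. -/
noncomputable def thetaSeries (M b : ℕ) : ℤ⟦X⟧ :=
  mk fun N => ∑ k ∈ Icc (-(N : ℤ)) N,
    if (M : ℤ) * k * (k - 1) + 2 * b * k = 2 * N then (k.negOnePow : ℤ) else 0

variable {M b : ℕ}

theorem two_mul_abs_le_theta_exponent (hb : 0 < b) (hbM : b < M) (k : ℤ) :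
    2 * |k| ≤ (M : ℤ) * k * (k - 1) + 2 * b * k := by
  have hb' : (0 : ℤ) ≤ b - 1 := by omega
  have hbM' : (0 : ℤ) ≤ M - b - 1 := by omega
  have h₁ : 0 ≤ k * (k - 1) := by
    rcases le_or_gt k 0 with h | h <;> nlinarith
  have h₂ : 0 ≤ k * (k + 1) := by
    rcases le_or_gt k (-1) with h | h <;> nlinarith
  rcases abs_cases k with ⟨h, hk⟩ | ⟨h, hk⟩ <;> rw [h]
  · nlinarith [mul_nonneg (Int.natCast_nonneg M) h₁, mul_nonneg hb' hk]
  · nlinarith [mul_nonneg hbM' h₁, mul_nonneg (by omega : (0 : ℤ) ≤ b + 1) h₂]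

theorem coeff_thetaSeries (hb : 0 < b) (hbM : b < M) {N : ℕ} {s : Finset ℤ}
    (hs : ∀ k : ℤ, (M : ℤ) * k * (k - 1) + 2 * b * k = 2 * N → k ∈ s) :
    coeff N (thetaSeries M b) = ∑ k ∈ s,
      if (M : ℤ) * k * (k - 1) + 2 * b * k = 2 * N then (k.negOnePow : ℤ) else 0 := by
  rw [thetaSeries, coeff_mk, ← sum_filter, ← sum_filter]
  congr 1
  ext k
  simp only [mem_filter, mem_Icc, and_congr_left_iff]
  intro hk
  have := two_mul_abs_le_theta_exponent hb hbM k
  exact ⟨fun _ => hs k hk,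
    fun _ => ⟨by linarith [neg_abs_le k], by linarith [le_abs_self k]⟩⟩

theorem coeff_X_pow_mul_thetaSeries (hb : 0 < b) (hbM : b < M) (c N : ℕ) :
    coeff N (X ^ c * thetaSeries M b) = ∑ k ∈ Icc (-(N : ℤ)) N,
      if (M : ℤ) * k * (k - 1) + 2 * b * k + 2 * c = 2 * N then (k.negOnePow : ℤ) else 0 := by
  rw [coeff_X_pow_mul']
  split_ifs with hcN
  · rw [coeff_thetaSeries hb hbM (s := Icc (-(N : ℤ)) N)]
    · push_cast [hcN]
      exact sum_congr rfl fun k _ => if_congr (by constructor <;> intro h <;> linarith) rfl rfl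
    · intro k hk
      have := two_mul_abs_le_theta_exponent hb hbM k
      push_cast [hcN] at hk
      rw [mem_Icc]
      constructor <;> linarith [neg_abs_le k, le_abs_self k]
  · refine (sum_eq_zero fun k _ => if_neg fun h => ?_).symm
    have := two_mul_abs_le_theta_exponent hb hbM k
    have : (N : ℤ) < c := by exact_mod_cast not_le.mp hcN
    linarith [abs_nonneg k]

theorem coeff_thetaSeries_eq_sum_mod_three (hb : 0 < b) (hbM : b < M) (N : ℕ) :
    coeff N (thetaSeries M b) = ∑ j ∈ Icc (-(N : ℤ)) N, ∑ r ∈ ({-1, 0, 1} : Finset ℤ),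
      if (M : ℤ) * (3 * j + r) * (3 * j + r - 1) + 2 * b * (3 * j + r) = 2 * N
      then ((3 * j + r).negOnePow : ℤ) else 0 := by
  have hsol : ∀ k : ℤ, (M : ℤ) * k * (k - 1) + 2 * b * k = 2 * N →
      k ∈ (Icc (-(N : ℤ)) N ×ˢ ({-1, 0, 1} : Finset ℤ)).image fun p => 3 * p.1 + p.2 := by
    intro k hk
    have := two_mul_abs_le_theta_exponent hb hbM k
    have := neg_abs_le k
    have := le_abs_self k
    refine mem_image.mpr ⟨((k + 1) / 3, k - 3 * ((k + 1) / 3)), ?_, by ring⟩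
    simp only [mem_product, mem_Icc, mem_insert, mem_singleton]
    omega
  have hinj : Set.InjOn (fun p : ℤ × ℤ => 3 * p.1 + p.2)
      (Icc (-(N : ℤ)) N ×ˢ ({-1, 0, 1} : Finset ℤ) : Finset (ℤ × ℤ)) := by
    rintro ⟨j, r⟩ hjr ⟨j', r'⟩ hjr' h
    simp only [coe_product, Set.mem_prod, mem_coe, mem_insert, mem_singleton] at hjr hjr' h
    ext <;> simp only <;> omega
  rw [coeff_thetaSeries hb hbM hsol, sum_image hinj, sum_product]

theorem thetaSeries_trisection (hb : 0 < b) (hbM : b < M) :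
    thetaSeries M b = thetaSeries (9 * M) (3 * (M + b))
      - X ^ b * thetaSeries (9 * M) (3 * (2 * M + b))
      - X ^ (M - b) * thetaSeries (9 * M) (3 * b) := by
  ext N
  have hX0 : ∀ f : ℤ⟦X⟧, coeff N f = coeff N (X ^ 0 * f) := by simp
  rw [coeff_thetaSeries_eq_sum_mod_three hb hbM, map_sub, map_sub, hX0,
    coeff_X_pow_mul_thetaSeries (by omega) (by omega),
    coeff_X_pow_mul_thetaSeries (by omega) (by omega),
    coeff_X_pow_mul_thetaSeries (by omega) (by omega), ← sum_sub_distrib, ← sum_sub_distrib]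
  refine sum_congr rfl fun j _ => ?_
  rw [sum_insert (by decide), sum_insert (by decide), sum_singleton]
  push_cast [Nat.cast_sub hbM.le]
  have hσ₀ : (3 * j).negOnePow = j.negOnePow := Int.negOnePow_eq_iff _ _ |>.mpr ⟨j, by ring⟩
  have hσ₁ : (3 * j + 1).negOnePow = -j.negOnePow := by rw [Int.negOnePow_succ, hσ₀]
  have hσ₂ : (3 * j + -1).negOnePow = -j.negOnePow := by
    rw [Int.negOnePow_add, hσ₀, Int.negOnePow_neg, Int.negOnePow_one, mul_neg_one]
  have e₀ : (M : ℤ) * (3 * j) * (3 * j - 1) + 2 * b * (3 * j) = 2 * N ↔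
      9 * (M : ℤ) * j * (j - 1) + 2 * (3 * (M + b)) * j = 2 * N := by
    constructor <;> intro h <;> linear_combination h
  have e₁ : (M : ℤ) * (3 * j + 1) * (3 * j + 1 - 1) + 2 * b * (3 * j + 1) = 2 * N ↔
      9 * (M : ℤ) * j * (j - 1) + 2 * (3 * (2 * M + b)) * j + 2 * b = 2 * N := by
    constructor <;> intro h <;> linear_combination h
  have e₂ : (M : ℤ) * (3 * j + -1) * (3 * j + -1 - 1) + 2 * b * (3 * j + -1) = 2 * N ↔
      9 * (M : ℤ) * j * (j - 1) + 2 * (3 * b) * j + 2 * (M - b) = 2 * N := by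
    constructor <;> intro h <;> linear_combination h
  simp only [add_zero, hσ₀, hσ₁, hσ₂, e₀, e₁, e₂, Units.val_neg]
  split_ifs <;> ring

end ThetaSeries

section JacobiTripleProduct

variable {M b : ℕ}

theorem two_mul_jacobi_exponent (n k : ℕ) (hk : k ≤ 2 * n) :
    2 * ((M * (k.choose 2 + n * (2 * n - k)) + b * k : ℕ) : ℤ) =
      2 * ((M * (n.choose 2 + n * n) + b * n : ℕ) : ℤ)
        + M * ((k : ℤ) - n) * ((k : ℤ) - n - 1) + 2 * b * ((k : ℤ) - n) := by
  qify
  push_cast [Nat.cast_choose_two, Nat.cast_sub hk]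
  ring

theorem X_pow_mul_prod_eq_sum (n : ℕ) (hbM : b ≤ M) :
    (X : ℤ⟦X⟧) ^ (M * (n.choose 2 + n * n) + b * n) * ∏ j ∈ range n,
        ((1 - X ^ (M * j + b)) * (1 - X ^ (M * j + (M - b))) * (1 - X ^ (M * j + M))) =
      ∑ k ∈ range (2 * n + 1), (-1) ^ (n + k) *
        (X ^ (M * (k.choose 2 + n * (2 * n - k)) + b * k) *
          (qBinom (X ^ M) (2 * n) k * ∏ i ∈ range n, (1 - (X ^ M) ^ (i + 1)))) := by
  have h := congrArg (· * ∏ i ∈ range n, (1 - (X ^ M : ℤ⟦X⟧) ^ (i + 1)))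
    (prod_one_sub_mul_sub_eq_sum (X ^ M : ℤ⟦X⟧) (X ^ b) n)
  simp only [sum_mul] at h
  have hfactor : ∀ j, (1 - (X ^ M : ℤ⟦X⟧) ^ j * X ^ b) * (X ^ b - (X ^ M) ^ (j + 1))
      * (1 - (X ^ M) ^ (j + 1))
      = X ^ b * ((1 - X ^ (M * j + b)) * (1 - X ^ (M * j + (M - b))) * (1 - X ^ (M * j + M))) := by
    intro j
    have hMb : (X : ℤ⟦X⟧) ^ (M * j + M) = X ^ b * X ^ (M * j + (M - b)) := by
      rw [← pow_add]; congr 1; omega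
    simp only [← pow_mul, ← pow_add, mul_add, mul_one]
    linear_combination -(1 - X ^ (M * j + b)) * (1 - X ^ (M * j + M)) * hMb
  rw [mul_assoc, ← prod_mul_distrib, prod_congr rfl fun j _ => hfactor j, prod_mul_distrib,
    prod_const, card_range, ← pow_mul, ← pow_mul, ← mul_assoc, ← pow_add] at h
  rw [h]
  refine sum_congr rfl fun k _ => ?_
  rw [pow_add]
  ring

theorem coeff_prod_one_sub_X_pow_eq_sum (hb : 0 < b) (hbM : b < M) {N n : ℕ}
    (hn : 2 * N + 1 ≤ n) :
    coeff N (∏ j ∈ range n,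
        ((1 - X ^ (M * j + b)) * (1 - X ^ (M * j + (M - b))) * (1 - X ^ (M * j + M)))) =
      ∑ k ∈ range (2 * n + 1),
        if (M : ℤ) * (k - n) * (k - n - 1) + 2 * b * (k - n) = 2 * N
        then (((k : ℤ) - n).negOnePow : ℤ) else 0 := by
  rw [← coeff_X_pow_mul _ (M * (n.choose 2 + n * n) + b * n) N, X_pow_mul_prod_eq_sum n hbM.le,
    map_sum]
  refine sum_congr rfl fun k hk => ?_
  have hk' : k ≤ 2 * n := by have := mem_range.mp hk; omega
  have hexp := two_mul_jacobi_exponent (M := M) (b := b) n k hk'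
  have habs := two_mul_abs_le_theta_exponent hb hbM ((k : ℤ) - n)
  have hsign : (((k : ℤ) - n).negOnePow : ℤ) = (-1) ^ (n + k) := by
    rw [Int.negOnePow_sub, Units.val_mul, Int.coe_negOnePow_natCast, Int.coe_negOnePow_natCast,
      pow_add, mul_comm]
  rw [show ((-1 : ℤ⟦X⟧)) ^ (n + k) = C ((-1 : ℤ) ^ (n + k)) by simp, coeff_C_mul,
    coeff_X_pow_mul_of_sModEq_one (m := M * (min k (2 * n - k) + 1))]
  · rw [hsign]
    generalize M * (k.choose 2 + n * (2 * n - k)) + b * k = e at hexp ⊢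
    generalize M * (n.choose 2 + n * n) + b * n = E at hexp ⊢
    set Q := (M : ℤ) * (k - n) * (k - n - 1) + 2 * b * (k - n)
    split_ifs <;> omega
  · rw [pow_mul]
    exact qBinom_mul_prod_sModEq_one _ hk'
  · have hm : min k (2 * n - k) + 1 ≤ M * (min k (2 * n - k) + 1) :=
      Nat.le_mul_of_pos_left _ (by omega)
    have := neg_abs_le ((k : ℤ) - n)
    have := le_abs_self ((k : ℤ) - n)
    omega

theorem prod_range_mul_ite_eq_prod (hb : 0 < b) (hbM : b < M) (h2b : 2 * b ≠ M) (n : ℕ) :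
    ∏ i ∈ range (M * n), (if (i + 1) % M = 0 ∨ (i + 1) % M = b ∨ (i + 1) % M = M - b
        then (1 : ℤ⟦X⟧) - X ^ (i + 1) else 1) =
      ∏ j ∈ range n,
        ((1 - X ^ (M * j + b)) * (1 - X ^ (M * j + (M - b))) * (1 - X ^ (M * j + M))) := by
  induction n with
  | zero => simp
  | succ n ih =>
    rw [Nat.mul_succ, prod_range_add, ih, prod_range_succ]
    congr 1
    have hcond : ∀ r ∈ range M, ((M * n + r + 1) % M = 0 ∨ (M * n + r + 1) % M = b ∨
        (M * n + r + 1) % M = M - b) ↔ r ∈ ({b - 1, M - b - 1, M - 1} : Finset ℕ) := by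
      intro r hr
      have := mem_range.mp hr
      rw [add_assoc, Nat.mul_add_mod]
      rcases Nat.lt_or_ge (r + 1) M with h | h
      · rw [Nat.mod_eq_of_lt h]; simp; omega
      · rw [show r + 1 = M by omega, Nat.mod_self]; simp; omega
    rw [prod_congr rfl fun r hr => if_congr (hcond r hr) rfl rfl, prod_ite_mem,
      inter_eq_right.mpr (by intro r; simp; omega), prod_insert (by simp; omega),
      prod_insert (by simp; omega), prod_singleton]
    rw [show M * n + (b - 1) + 1 = M * n + b by omega,
      show M * n + (M - b - 1) + 1 = M * n + (M - b) by omega,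
      show M * n + (M - 1) + 1 = M * n + M by omega]
    ring

theorem seriesProd_eq_thetaSeries (hb : 0 < b) (hbM : b < M) (h2b : 2 * b ≠ M) :
    seriesProd (fun i => if (i + 1) % M = 0 ∨ (i + 1) % M = b ∨ (i + 1) % M = M - b
      then (1 : ℤ⟦X⟧) - X ^ (i + 1) else 1) = thetaSeries M b := by
  ext N
  set n := 2 * N + 1
  have hsol : ∀ k : ℤ, (M : ℤ) * k * (k - 1) + 2 * b * k = 2 * N →
      k ∈ (range (2 * n + 1)).image fun i : ℕ => (i : ℤ) - n := by
    intro k hk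
    have := two_mul_abs_le_theta_exponent hb hbM k
    have := neg_abs_le k
    have := le_abs_self k
    exact mem_image.mpr ⟨(k + n).toNat, mem_range.mpr (by omega), by omega⟩
  have hf : ∀ i, (if (i + 1) % M = 0 ∨ (i + 1) % M = b ∨ (i + 1) % M = M - b
      then (1 : ℤ⟦X⟧) - X ^ (i + 1) else 1) ≡ 1
        [SMOD Ideal.span {(X : ℤ⟦X⟧) ^ (i + 1)}] := by
    intro i
    split_ifs
    exacts [one_sub_pow_sModEq_one X le_rfl, SModEq.rfl]
  have hmod := seriesProd_sModEq_prod hf (e := N + 1)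
    (le_trans (by omega) (Nat.le_mul_of_pos_left n (by omega : 0 < M)))
  rw [sModEq_span_X_pow_iff.mp hmod N N.lt_succ_self, prod_range_mul_ite_eq_prod hb hbM h2b,
    coeff_prod_one_sub_X_pow_eq_sum hb hbM le_rfl, coeff_thetaSeries hb hbM hsol,
    sum_image fun i _ j _ h => by simpa using h]

end JacobiTripleProduct

theorem invOfUnit_one_sub_X_pow_sModEq_one (n : ℕ) :
    invOfUnit ((1 : ℤ⟦X⟧) - X ^ (n + 1)) 1 ≡ 1
      [SMOD Ideal.span {(X : ℤ⟦X⟧) ^ (n + 1)}] := by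
  have h := mul_invOfUnit ((1 : ℤ⟦X⟧) - X ^ (n + 1)) 1 (by simp)
  rw [SModEq.sub_mem, Ideal.mem_span_singleton]
  exact ⟨invOfUnit _ 1, by linear_combination h⟩

theorem seriesProd_mul_AG_eq_thetaSeries {a b : ℕ} (hb : 0 < b) (hb27 : b < 27)
    (h2b : 2 * b ≠ 27)
    (hab : ∀ n : ℕ, ((n + 1) % 27 = 0 ∨ (n + 1) % 27 = a % 27 ∨ (n + 1 + a) % 27 = 0) ↔
      ((n + 1) % 27 = 0 ∨ (n + 1) % 27 = b ∨ (n + 1) % 27 = 27 - b)) :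
    seriesProd (fun n => 1 - X ^ (n + 1)) * AG a = thetaSeries 27 b := by
  rw [AG, seriesProd_mul (fun n => one_sub_pow_sModEq_one X le_rfl) fun n => by
      split_ifs
      exacts [SModEq.rfl, invOfUnit_one_sub_X_pow_sModEq_one n],
    ← seriesProd_eq_thetaSeries hb hb27 h2b]
  congr 1
  funext n
  rw [if_congr (hab n) rfl rfl]
  split_ifs
  · exact mul_one _
  · exact mul_invOfUnit _ _ (by simp)

/-- The q-series identity
`∏_{n ≢ 0,±12 (27)} 1/(1-qⁿ) - q ∏_{n ≢ 0,±6 (27)} 1/(1-qⁿ)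
  - q² ∏_{n ≢ 0,±3 (27)} 1/(1-qⁿ) = 1` in `ℤ⟦q⟧`. -/
theorem andrews_gordon_q_series_identity :
    AG 12 - X * AG 6 - X ^ 2 * AG 3 = 1 := by
  set E := seriesProd fun n => (1 : ℤ⟦X⟧) - X ^ (n + 1) with hE_def
  have hE : E = thetaSeries 3 1 := by
    rw [hE_def, ← seriesProd_eq_thetaSeries (by norm_num) (by norm_num) (by norm_num)]
    exact congrArg seriesProd (funext fun n => by rw [if_pos (by omega)])
  have hE0 : E ≠ 0 := fun h => by simpa [E, seriesProd] using congrArg (coeff 0) h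
  refine mul_left_cancel₀ hE0 ?_
  calc E * (AG 12 - X * AG 6 - X ^ 2 * AG 3)
      = E * AG 12 - X * (E * AG 6) - X ^ 2 * (E * AG 3) := by ring
    _ = thetaSeries 27 12 - X * thetaSeries 27 21 - X ^ 2 * thetaSeries 27 3 := by
      rw [seriesProd_mul_AG_eq_thetaSeries (b := 12) (by norm_num) (by norm_num) (by norm_num)
          fun n => by omega,
        seriesProd_mul_AG_eq_thetaSeries (b := 21) (by norm_num) (by norm_num) (by norm_num)
          fun n => by omega,
        seriesProd_mul_AG_eq_thetaSeries (b := 3) (by norm_num) (by norm_num) (by norm_num)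
          fun n => by omega]
    _ = E * 1 := by
      rw [mul_one, hE, thetaSeries_trisection (M := 3) (b := 1) (by norm_num) (by norm_num)]
      norm_num
end

section
/- Euler's pentagonal number theorem: Π_{n≥1} (1 - q^n) = Σ_{m∈ℤ} (-1)^m q^{m(3m-1)/2} as formal power series. -/
open PowerSeries

/-- A formal sum `∑_{n ∈ ℤ} c n * q^(e n)`, where for each `N` only finitely many
`n ∈ ℤ` satisfy `e n = N`: its `N`-th coefficient is `∑_{n : e n = N} c n`. -/
noncomputable def seriesSum (c : ℤ → ℤ) (e : ℤ → ℕ) : PowerSeries ℤ :=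
  PowerSeries.mk fun N => ∑' n : ℤ, if e n = N then c n else 0

/-!
Mathlib's `PowerSeries.hasProd_one_sub_X_pow` and `PowerSeries.hasSum_pentagonalSeries` show
that, in the coefficientwise topology on `ℤ⟦X⟧`, the product and the sum converge to the same
series `pentagonalSeries`, so it suffices that `seriesProd` and `seriesSum` are these limits.
For the product: a factor `f n ≡ 1 mod X^(n+1)` with `n ≥ N` does not change the `N`-th
coefficient of a partial product.
-/

open Finset Filter PowerSeries.WithPiTopology

namespace PowerSeries

variable {R ι : Type*} [CommRing R]

theorem coeff_mul_of_X_pow_dvd_sub_one {P Q : R⟦X⟧} {N : ℕ} (hQ : X ^ (N + 1) ∣ Q - 1) :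
    coeff N (P * Q) = coeff N P := by
  have h : coeff N (P * (Q - 1)) = 0 :=
    X_pow_dvd_iff.mp (dvd_mul_of_dvd_right hQ P) N N.lt_succ_self
  rwa [mul_sub, mul_one, map_sub, sub_eq_zero] at h

theorem X_pow_dvd_prod_sub_one {f : ι → R⟦X⟧} {s : Finset ι} {k : ℕ}
    (hf : ∀ i ∈ s, X ^ k ∣ f i - 1) : X ^ k ∣ ∏ i ∈ s, f i - 1 := by
  refine prod_induction f (fun g => X ^ k ∣ g - 1) (fun a b ha hb => ?_) (by simp) hf
  rw [show a * b - 1 = (a - 1) * b + (b - 1) by ring]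
  exact (dvd_mul_of_dvd_left ha b).add hb

theorem coeff_prod_of_subset [DecidableEq ι] {f : ι → R⟦X⟧} {s t : Finset ι} {N : ℕ}
    (hst : s ⊆ t) (hf : ∀ i ∈ t \ s, X ^ (N + 1) ∣ f i - 1) :
    coeff N (∏ i ∈ t, f i) = coeff N (∏ i ∈ s, f i) := by
  rw [← prod_sdiff hst, mul_comm]
  exact coeff_mul_of_X_pow_dvd_sub_one (X_pow_dvd_prod_sub_one hf)

end PowerSeries

theorem coeff_seriesProd {f : ℕ → ℤ⟦X⟧} (hf : ∀ n, X ^ (n + 1) ∣ f n - 1) {N : ℕ}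
    {s : Finset ℕ} (hs : range (N + 1) ⊆ s) :
    coeff N (seriesProd f) = coeff N (∏ n ∈ s, f n) := by
  rw [seriesProd, coeff_mk, coeff_prod_of_subset hs]
  intro n hn
  have hNn : N + 1 ≤ n + 1 := by
    have := (mem_sdiff.mp hn).2
    rw [mem_range] at this
    omega
  exact (pow_dvd_pow X hNn).trans (hf n)

theorem hasProd_seriesProd {f : ℕ → ℤ⟦X⟧} (hf : ∀ n, X ^ (n + 1) ∣ f n - 1) :
    HasProd f (seriesProd f) := by
  rw [HasProd, tendsto_iff_coeff_tendsto]
  exact fun N => tendsto_nhds_of_eventually_eq <|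
    eventually_atTop.mpr ⟨range (N + 1), fun s hs => (coeff_seriesProd hf hs).symm⟩

theorem hasSum_seriesSum (c : ℤ → ℤ) {e : ℤ → ℕ} (he : Function.Injective e) :
    HasSum (fun m => (c m : ℤ⟦X⟧) * X ^ e m) (seriesSum c e) := by
  rw [hasSum_iff_hasSum_coeff]
  intro N
  have hfin : (fun m => if e m = N then c m else 0).support.Finite :=
    ((Set.finite_singleton N).preimage he.injOn).subset fun m hm => by
      by_contra h
      exact hm (if_neg h)
  simp only [← map_intCast (C (R := ℤ)), coeff_C_mul_X_pow]
  simpa [seriesSum, eq_comm] using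
    (summable_of_hasFiniteSupport (L := SummationFilter.unconditional ℤ) hfin).hasSum

/-- Euler's pentagonal number theorem:
`∏_{n ≥ 1} (1 - q^n) = ∑_{m ∈ ℤ} (-1)^m q^{m(3m-1)/2}` as formal power series. -/
theorem euler_pentagonal_number_theorem :
    seriesProd (fun n => 1 - X ^ (n + 1)) =
      seriesSum (fun m => (m.negOnePow : ℤ)) (fun m => (m * (3 * m - 1) / 2).toNat) := by
  have hprod : seriesProd (fun n => 1 - X ^ (n + 1)) = pentagonalSeries ℤ :=
    (hasProd_seriesProd fun n => by simp).unique (hasProd_one_sub_X_pow ℤ)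
  have hsum : seriesSum (fun m => (m.negOnePow : ℤ)) pentagonal = pentagonalSeries ℤ :=
    (hasSum_seriesSum _ pentagonal_injective).unique (hasSum_pentagonalSeries ℤ)
  exact hprod.trans hsum.symm
end

section
/- Jacobi's triple product identity: for |q| < 1 and y ≠ 0, Σ_{n∈ℤ} y^n q^{n^2} = Π_{n≥1} (1 - q^{2n})(1 + y q^{2n-1})(1 + y^{-1} q^{2n-1}). -/
/-!
Pulling `y q^{-(2j+1)}` out of `1 + y q^{-(2j+1)}` shows that, for `x = y q^{1-2N}`,
`∏_{i<2N} (1 + x q^{2i}) = yᴺ q^{-N²} ∏_{j<N} (1 + y q^{2j+1})(1 + y⁻¹ q^{2j+1})`, so the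
`q`-binomial theorem expands the partial product as `∑_{|n| ≤ N} [2N, N+n]_{q²} yⁿ q^{n²}`.
As `N → ∞` the Gaussian binomial `[2N, N+n]_{q²}` tends to `1 / ∏_{i ≥ 1} (1 - q^{2i})` while
staying uniformly bounded, so Tannery's theorem lets the limit pass under the sum.
-/

open Finset Filter Topology

namespace JacobiTripleProduct

section Algebra

variable {R : Type*} [CommRing R]

def qBinomial (Q : R) : ℕ → ℕ → R
  | _, 0 => 1
  | 0, _ + 1 => 0
  | M + 1, k + 1 => qBinomial Q M k + Q ^ (k + 1) * qBinomial Q M (k + 1)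

def qPochhammer (Q : R) (N : ℕ) : R := ∏ i ∈ range N, (1 - Q ^ (i + 1))

lemma qBinomial_eq_zero_of_lt (Q : R) : ∀ {M k : ℕ}, M < k → qBinomial Q M k = 0
  | 0, _ + 1, _ => rfl
  | M + 1, k + 1, h => by
    rw [qBinomial, qBinomial_eq_zero_of_lt Q (by omega), qBinomial_eq_zero_of_lt Q (by omega),
      mul_zero, add_zero]

lemma qPochhammer_succ (Q : R) (N : ℕ) :
    qPochhammer Q (N + 1) = qPochhammer Q N * (1 - Q ^ (N + 1)) :=
  prod_range_succ _ _

theorem prod_one_add_mul_pow_eq_sum (Q x : R) (M : ℕ) :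
    ∏ i ∈ range M, (1 + x * Q ^ i) =
      ∑ k ∈ range (M + 1), qBinomial Q M k * Q ^ k.choose 2 * x ^ k := by
  induction M generalizing x with
  | zero => simp [qBinomial]
  | succ M ih =>
    have hshift : ∑ k ∈ range (M + 1), qBinomial Q M k * Q ^ k.choose 2 * (x * Q) ^ k =
        ∑ k ∈ range (M + 1), Q ^ (k + 1) * qBinomial Q M (k + 1) * Q ^ (k + 1).choose 2 *
          x ^ (k + 1) + 1 := by
      calc _ = ∑ k ∈ range (M + 2), qBinomial Q M k * Q ^ k.choose 2 * (x * Q) ^ k := by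
            rw [sum_range_succ _ (M + 1), qBinomial_eq_zero_of_lt Q M.lt_succ_self, zero_mul,
              zero_mul, add_zero]
        _ = _ := by
            rw [sum_range_succ']
            simp only [qBinomial, Nat.choose_zero_succ, pow_zero, mul_one]
            congr 1
            exact sum_congr rfl fun k _ => by ring
    calc ∏ i ∈ range (M + 1), (1 + x * Q ^ i)
        = (∏ i ∈ range M, (1 + (x * Q) * Q ^ i)) * (1 + x) := by
          rw [prod_range_succ']
          simp only [pow_succ, pow_zero, mul_one, mul_assoc, mul_comm Q]
      _ = _ := by
          have hterm : ∑ k ∈ range (M + 1), qBinomial Q M k * Q ^ k.choose 2 * (x * Q) ^ k * x =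
              ∑ k ∈ range (M + 1), qBinomial Q M k * Q ^ (k + 1).choose 2 * x ^ (k + 1) :=
            sum_congr rfl fun k _ => by rw [Nat.choose_succ_succ', Nat.choose_one_right]; ring
          rw [ih, mul_one_add, sum_mul, hshift, hterm, sum_range_succ' _ (M + 1)]
          simp only [qBinomial, add_mul, sum_add_distrib, Nat.choose_zero_succ, pow_zero]
          ring

theorem qBinomial_mul_qPochhammer_mul_qPochhammer (Q : R) {M k : ℕ} (hk : k ≤ M) :
    qBinomial Q M k * qPochhammer Q k * qPochhammer Q (M - k) = qPochhammer Q M := by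
  induction M generalizing k with
  | zero =>
    obtain rfl : k = 0 := by omega
    simp [qBinomial, qPochhammer]
  | succ M ih =>
    cases k with
    | zero => simp [qBinomial, qPochhammer]
    | succ k =>
      rw [qBinomial, Nat.add_sub_add_right, qPochhammer_succ, qPochhammer_succ Q M]
      rcases (Nat.le_of_lt_succ hk).lt_or_eq with hlt | rfl
      · obtain ⟨d, hd⟩ : ∃ d, M - k = d + 1 := ⟨M - k - 1, by omega⟩
        have h₁ := ih (k := k) (by omega)
        have h₂ := ih (k := k + 1) hlt
        rw [hd, qPochhammer_succ] at h₁ ⊢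
        rw [show M - (k + 1) = d by omega, qPochhammer_succ] at h₂
        have hpow : Q ^ (k + 1) * Q ^ (d + 1) = Q ^ (M + 1) := by rw [← pow_add]; congr 1; omega
        linear_combination (1 - Q ^ (k + 1)) * h₁ + Q ^ (k + 1) * (1 - Q ^ (d + 1)) * h₂ -
          qPochhammer Q M * hpow
      · have h := ih (k := k) le_rfl
        rw [Nat.sub_self] at h ⊢
        rw [qBinomial_eq_zero_of_lt Q k.lt_succ_self]
        linear_combination (1 - Q ^ (k + 1)) * h

end Algebra

lemma prod_range_pow_two_mul_add_one {M : Type*} [CommMonoid M] (q : M) (N : ℕ) :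
    ∏ j ∈ range N, q ^ (2 * j + 1) = q ^ (N ^ 2) := by
  induction N with
  | zero => simp
  | succ N ih =>
    rw [prod_range_succ, ih, ← pow_add]
    ring_nf

section FiniteProduct

variable {K : Type*} [Field K] {q y : K}

lemma two_mul_choose_two (k : ℕ) : 2 * (k.choose 2 : ℤ) = k * (k - 1) := by
  have h : ((2 * k.choose 2 : ℤ) : ℚ) = ((k * (k - 1) : ℤ) : ℚ) := by
    push_cast
    rw [Nat.cast_choose_two]
    ring
  exact_mod_cast h

lemma sq_pow_eq_zpow (q : K) (m : ℕ) : (q ^ 2) ^ m = q ^ (2 * (m : ℤ)) := by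
  rw [← pow_mul, ← zpow_natCast]
  push_cast
  ring_nf

lemma prod_range_two_mul_one_add_mul_sq_pow (hq : q ≠ 0) (hy : y ≠ 0) (N : ℕ) :
    ∏ i ∈ range (2 * N), (1 + y * q ^ (1 - 2 * (N : ℤ)) * (q ^ 2) ^ i) = y ^ N * (q ^ (N ^ 2))⁻¹ *
      ∏ j ∈ range N, ((1 + y * q ^ (2 * j + 1)) * (1 + y⁻¹ * q ^ (2 * j + 1))) := by
  have hlow : ∀ j ∈ range N, 1 + y * q ^ (1 - 2 * (N : ℤ)) * (q ^ 2) ^ (N - 1 - j) =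
      y * (q ^ (2 * j + 1))⁻¹ * (1 + y⁻¹ * q ^ (2 * j + 1)) := by
    intro j hj
    have hjN : j < N := mem_range.1 hj
    have e₁ : q ^ (1 - 2 * (N : ℤ)) * q ^ (2 * ((N - 1 - j : ℕ) : ℤ)) = (q ^ (2 * j + 1))⁻¹ := by
      rw [← zpow_add₀ hq, ← zpow_natCast, ← zpow_neg,
        show ((N - 1 - j : ℕ) : ℤ) = N - 1 - j by omega]
      push_cast
      ring_nf
    have e₂ : (q ^ (2 * j + 1))⁻¹ * q ^ (2 * j + 1) = 1 := inv_mul_cancel₀ (pow_ne_zero _ hq)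
    rw [sq_pow_eq_zpow]
    linear_combination y * e₁ - e₂ -
      (q ^ (2 * j + 1))⁻¹ * q ^ (2 * j + 1) * mul_inv_cancel₀ hy
  have hhigh : ∀ j ∈ range N,
      1 + y * q ^ (1 - 2 * (N : ℤ)) * (q ^ 2) ^ (N + j) = 1 + y * q ^ (2 * j + 1) := by
    intro j _
    rw [sq_pow_eq_zpow, mul_assoc, ← zpow_add₀ hq, ← zpow_natCast]
    congr 3
    push_cast
    ring
  rw [two_mul, prod_range_add, ← prod_range_reflect, prod_congr rfl hlow, prod_congr rfl hhigh,
    prod_mul_distrib, prod_mul_distrib, prod_const, card_range, prod_inv_distrib,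
    prod_range_pow_two_mul_add_one, prod_mul_distrib]
  ring

lemma sum_range_qBinomial_mul_sq_pow_choose_two (hq : q ≠ 0) (hy : y ≠ 0) (N : ℕ) :
    ∑ k ∈ range (2 * N + 1),
        qBinomial (q ^ 2) (2 * N) k * (q ^ 2) ^ k.choose 2 * (y * q ^ (1 - 2 * (N : ℤ))) ^ k =
      y ^ N * (q ^ (N ^ 2))⁻¹ * ∑ n ∈ Icc (-(N : ℤ)) N,
        qBinomial (q ^ 2) (2 * N) (n + N).toNat * (y ^ n * q ^ (n ^ 2)) := by
  rw [mul_sum]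
  refine sum_nbij' (fun k => (k : ℤ) - N) (fun n => (n + N).toNat) ?_ ?_ ?_ ?_ ?_
  · intro k hk; simp only [mem_range, mem_Icc] at hk ⊢; omega
  · intro n hn; simp only [mem_range, mem_Icc] at hn ⊢; omega
  · intro k _; simp
  · intro n hn; simp only [mem_Icc] at hn; omega
  · intro k _
    simp only [sub_add_cancel, Int.toNat_natCast]
    have hyexp : y ^ N * y ^ ((k : ℤ) - N) = y ^ k := by
      rw [← zpow_natCast, ← zpow_add₀ hy, ← zpow_natCast]; ring_nf
    have hqexp : (q ^ 2) ^ k.choose 2 * (q ^ (1 - 2 * (N : ℤ))) ^ k =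
        (q ^ (N ^ 2))⁻¹ * q ^ (((k : ℤ) - N) ^ 2) := by
      rw [sq_pow_eq_zpow, ← zpow_natCast, ← zpow_mul, ← zpow_add₀ hq, ← zpow_natCast, ← zpow_neg,
        ← zpow_add₀ hq, two_mul_choose_two]
      push_cast
      ring_nf
    rw [mul_pow]
    linear_combination qBinomial (q ^ 2) (2 * N) k * y ^ k * hqexp -
      qBinomial (q ^ 2) (2 * N) k * (q ^ (N ^ 2))⁻¹ * q ^ (((k : ℤ) - N) ^ 2) * hyexp

theorem jacobi_triple_product_finite (hq : q ≠ 0) (hy : y ≠ 0) (N : ℕ) :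
    ∏ j ∈ range N, ((1 + y * q ^ (2 * j + 1)) * (1 + y⁻¹ * q ^ (2 * j + 1))) =
      ∑ n ∈ Icc (-(N : ℤ)) N, qBinomial (q ^ 2) (2 * N) (n + N).toNat * (y ^ n * q ^ (n ^ 2)) := by
  refine mul_left_cancel₀ (by positivity : y ^ N * (q ^ (N ^ 2))⁻¹ ≠ 0) ?_
  rw [← prod_range_two_mul_one_add_mul_sq_pow hq hy,
    ← sum_range_qBinomial_mul_sq_pow_choose_two hq hy]
  exact prod_one_add_mul_pow_eq_sum _ _ _

end FiniteProduct

section Analysis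

variable {Q : ℂ} (hQ : ‖Q‖ < 1)
include hQ

lemma one_sub_pow_succ_ne_zero (i : ℕ) : 1 - Q ^ (i + 1) ≠ 0 := by
  refine sub_ne_zero.2 fun h => ?_
  have : ‖Q ^ (i + 1)‖ < 1 := by
    rw [norm_pow]
    exact pow_lt_one₀ (norm_nonneg _) hQ i.succ_ne_zero
  rw [← h, norm_one] at this
  exact lt_irrefl _ this

lemma qPochhammer_ne_zero (N : ℕ) : qPochhammer Q N ≠ 0 :=
  prod_ne_zero_iff.2 fun i _ => one_sub_pow_succ_ne_zero hQ i

lemma tendsto_qPochhammer :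
    Tendsto (qPochhammer Q) atTop (𝓝 (∏' i : ℕ, (1 - Q ^ (i + 1)))) :=
  (ModularForm.multipliable_one_sub_pow hQ).hasProd.tendsto_prod_nat

lemma tprod_one_sub_pow_succ_ne_zero : ∏' i : ℕ, (1 - Q ^ (i + 1)) ≠ 0 := by
  simp_rw [sub_eq_add_neg]
  refine tprod_one_add_ne_zero_of_summable (fun i => ?_) ?_
  · rw [← sub_eq_add_neg]; exact one_sub_pow_succ_ne_zero hQ i
  · simpa [norm_neg, norm_pow, summable_nat_add_iff 1] using
      summable_geometric_of_lt_one (norm_nonneg _) hQ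

lemma qBinomial_eq_mul_inv_mul_inv {M k : ℕ} (hk : k ≤ M) :
    qBinomial Q M k = qPochhammer Q M * (qPochhammer Q k)⁻¹ * (qPochhammer Q (M - k))⁻¹ := by
  rw [← qBinomial_mul_qPochhammer_mul_qPochhammer Q hk]
  field_simp [qPochhammer_ne_zero hQ]

lemma exists_norm_qBinomial_le : ∃ C, ∀ M k, ‖qBinomial Q M k‖ ≤ C := by
  obtain ⟨A, hA⟩ := isBounded_iff_forall_norm_le.1
    (Metric.isBounded_range_of_tendsto _ (tendsto_qPochhammer hQ))
  obtain ⟨B, hB⟩ := isBounded_iff_forall_norm_le.1 (Metric.isBounded_range_of_tendsto _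
    ((tendsto_qPochhammer hQ).inv₀ (tprod_one_sub_pow_succ_ne_zero hQ)))
  have hA₀ : 0 ≤ A := (norm_nonneg _).trans (hA _ ⟨0, rfl⟩)
  have hB₀ : 0 ≤ B := (norm_nonneg _).trans (hB _ ⟨0, rfl⟩)
  refine ⟨A * B * B, fun M k => ?_⟩
  rcases le_or_gt k M with hk | hk
  · rw [qBinomial_eq_mul_inv_mul_inv hQ hk, norm_mul, norm_mul]
    exact mul_le_mul (mul_le_mul (hA _ ⟨M, rfl⟩) (hB _ ⟨k, rfl⟩) (norm_nonneg _) hA₀)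
      (hB _ ⟨M - k, rfl⟩) (norm_nonneg _) (mul_nonneg hA₀ hB₀)
  · rw [qBinomial_eq_zero_of_lt Q hk, norm_zero]
    positivity

lemma tendsto_qBinomial_central (n : ℤ) :
    Tendsto (fun N : ℕ => qBinomial Q (2 * N) (n + N).toNat) atTop
      (𝓝 (∏' i : ℕ, (1 - Q ^ (i + 1)))⁻¹) := by
  have hP := tprod_one_sub_pow_succ_ne_zero hQ
  have h₁ : Tendsto (fun N : ℕ => 2 * N) atTop atTop :=
    tendsto_atTop_atTop.2 fun b => ⟨b, fun N hN => by omega⟩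
  have h₂ : Tendsto (fun N : ℕ => (n + N).toNat) atTop atTop :=
    tendsto_atTop_atTop.2 fun b => ⟨b + n.natAbs, fun N hN => by omega⟩
  have h₃ : Tendsto (fun N : ℕ => 2 * N - (n + N).toNat) atTop atTop :=
    tendsto_atTop_atTop.2 fun b => ⟨b + n.natAbs, fun N hN => by omega⟩
  have hlim := (((tendsto_qPochhammer hQ).comp h₁).mul
    (((tendsto_qPochhammer hQ).comp h₂).inv₀ hP)).mul (((tendsto_qPochhammer hQ).comp h₃).inv₀ hP)
  rw [mul_inv_cancel₀ hP, one_mul] at hlim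
  refine hlim.congr' ?_
  filter_upwards [eventually_ge_atTop n.natAbs] with N hN
  rw [qBinomial_eq_mul_inv_mul_inv hQ (by omega)]
  rfl

end Analysis

section Theta

open Complex
open scoped Real

variable {q y : ℂ}

lemma jacobiTheta₂_term_log_div (hq : q ≠ 0) (hy : y ≠ 0) (n : ℤ) :
    jacobiTheta₂_term n (log y / (2 * π * I)) (log q / (π * I)) = y ^ n * q ^ (n ^ 2) := by
  rw [jacobiTheta₂_term, show 2 * π * I * n * (log y / (2 * π * I)) + π * I * n ^ 2 *
      (log q / (π * I)) = n * log y + ((n ^ 2 : ℤ) : ℂ) * log q by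
    field_simp [I_ne_zero]; push_cast; ring, exp_add, exp_int_mul, exp_int_mul, exp_log hy,
    exp_log hq]

lemma summable_norm_zpow_mul_zpow_sq (hq₀ : q ≠ 0) (hq : ‖q‖ < 1) (hy : y ≠ 0) :
    Summable fun n : ℤ => ‖y ^ n * q ^ (n ^ 2)‖ := by
  have him : 0 < (log q / (π * I)).im := by
    rw [show log q / (π * I) = -(log q * I) / (π : ℂ) by field_simp [I_ne_zero]; ring_nf; simp,
      div_ofReal_im, neg_im, mul_I_im, log_re]
    exact div_pos (neg_pos.2 (Real.log_neg (norm_pos_iff.2 hq₀) hq)) Real.pi_pos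
  simp_rw [← jacobiTheta₂_term_log_div hq₀ hy]
  exact summable_norm_iff.2 ((summable_jacobiTheta₂_term_iff _ _).2 him)

lemma multipliable_one_add_mul_pow_two_mul_add_one (hq : ‖q‖ < 1) (c : ℂ) :
    Multipliable fun j : ℕ => 1 + c * q ^ (2 * j + 1) := by
  refine multipliable_one_add_of_summable ?_
  simp_rw [norm_mul, norm_pow, pow_succ, pow_mul]
  exact ((summable_geometric_of_lt_one (by positivity)
    (pow_lt_one₀ (norm_nonneg _) hq two_ne_zero)).mul_right _).mul_left _

end Theta

theorem tsum_zpow_mul_zpow_sq_eq_tprod {q y : ℂ} (hq₀ : q ≠ 0) (hq : ‖q‖ < 1) (hy : y ≠ 0) :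
    ∑' n : ℤ, y ^ n * q ^ (n ^ 2) =
      ∏' n : ℕ, ((1 - (q ^ 2) ^ (n + 1)) *
        ((1 + y * q ^ (2 * n + 1)) * (1 + y⁻¹ * q ^ (2 * n + 1)))) := by
  have hq₂ : ‖q ^ 2‖ < 1 := by rw [norm_pow]; exact pow_lt_one₀ (norm_nonneg _) hq two_ne_zero
  obtain ⟨C, hC⟩ := exists_norm_qBinomial_le hq₂
  have hlim : Tendsto
      (fun N => ∏ j ∈ range N, ((1 + y * q ^ (2 * j + 1)) * (1 + y⁻¹ * q ^ (2 * j + 1)))) atTop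
      (𝓝 ((∏' i : ℕ, (1 - (q ^ 2) ^ (i + 1)))⁻¹ * ∑' n : ℤ, y ^ n * q ^ (n ^ 2))) := by
    rw [← tsum_mul_left]
    refine (tendsto_tsum_of_dominated_convergence
      (f := fun (N : ℕ) => (Icc (-(N : ℤ)) N : Set ℤ).indicator
        fun n => qBinomial (q ^ 2) (2 * N) (n + N).toNat * (y ^ n * q ^ (n ^ 2)))
      (bound := fun n => C * ‖y ^ n * q ^ (n ^ 2)‖)
      ((summable_norm_zpow_mul_zpow_sq hq₀ hq hy).mul_left C) (fun n => ?_) ?_).congr fun N => ?_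
    · exact ((tendsto_qBinomial_central hq₂ n).mul_const _).congr' <|
        (eventually_ge_atTop n.natAbs).mono fun N hN =>
          (Set.indicator_of_mem (by rw [coe_Icc, Set.mem_Icc]; omega) _).symm
    · refine .of_forall fun N n => (norm_indicator_le_norm_self _ _).trans ?_
      rw [norm_mul]
      exact mul_le_mul_of_nonneg_right (hC _ _) (norm_nonneg _)
    · rw [← sum_eq_tsum_indicator, jacobi_triple_product_finite hq₀ hy]
  have hmul := (multipliable_one_add_mul_pow_two_mul_add_one hq y).mul
    (multipliable_one_add_mul_pow_two_mul_add_one hq y⁻¹)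
  rw [(ModularForm.multipliable_one_sub_pow hq₂).tprod_mul hmul,
    tendsto_nhds_unique hmul.hasProd.tendsto_prod_nat hlim, ← mul_assoc,
    mul_inv_cancel₀ (tprod_one_sub_pow_succ_ne_zero hq₂), one_mul]

end JacobiTripleProduct

open JacobiTripleProduct in
/-- Jacobi's triple product identity: for complex `q` with `|q| < 1` and `y ≠ 0`,
`Σ_{n∈ℤ} yⁿ q^{n²} = ∏_{n ≥ 1} (1 - q^{2n})(1 + y q^{2n-1})(1 + y⁻¹ q^{2n-1})`. -/
theorem jacobi_triple_product (q y : ℂ) (hq : ‖q‖ < 1) (hy : y ≠ 0) :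
    ∑' n : ℤ, y ^ n * q ^ (n ^ 2).toNat =
      ∏' n : ℕ, ((1 - q ^ (2 * (n + 1))) * (1 + y * q ^ (2 * (n + 1) - 1)) *
        (1 + y⁻¹ * q ^ (2 * (n + 1) - 1))) := by
  have hodd (n : ℕ) : 2 * (n + 1) - 1 = 2 * n + 1 := by omega
  rcases eq_or_ne q 0 with rfl | hq₀
  · rw [tsum_eq_single 0 fun n hn => by simp [hn]]
    simp [hodd]
  calc ∑' n : ℤ, y ^ n * q ^ (n ^ 2).toNat = ∑' n : ℤ, y ^ n * q ^ (n ^ 2) :=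
        tsum_congr fun n => by rw [← zpow_natCast, Int.toNat_of_nonneg (sq_nonneg n)]
    _ = _ := tsum_zpow_mul_zpow_sq_eq_tprod hq₀ hq hy
    _ = _ := tprod_congr fun n => by rw [← pow_mul, mul_assoc, hodd]
end

section
/- For an integer k ≥ 2, there exists 1 ≤ i ≤ k with a(i,k) = 0 (where a(i,k) = ((2k+1)(3k+1-6i) + 6i^2)/(12(2k+1))) if and only if k = 6t^2 - 6t + 1 for some integer t ≥ 2. -/
/-- For an integer `k ≥ 2`, there exists `1 ≤ i ≤ k` with `a(i,k) = 0`, where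
`a(i,k) = ((2k+1)(3k+1-6i) + 6i²)/(12(2k+1))`, if and only if
`k = 6t² - 6t + 1` for some integer `t ≥ 2`. -/
theorem a_ik_vanishes_iff (k : ℕ) (hk : 2 ≤ k) :
    (∃ i : ℕ, 1 ≤ i ∧ i ≤ k ∧
        ((2 * (k : ℚ) + 1) * (3 * k + 1 - 6 * i) + 6 * (i : ℚ) ^ 2) /
          (12 * (2 * k + 1)) = 0) ↔
      ∃ t : ℕ, 2 ≤ t ∧ k = 6 * t ^ 2 - 6 * t + 1 := by
  constructor
  · rintro ⟨i, h1, h2, heq⟩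
    have hden : (12 * (2 * (k : ℚ) + 1)) ≠ 0 := by positivity
    have hnum : (2 * (k : ℚ) + 1) * (3 * k + 1 - 6 * i) + 6 * (i : ℚ) ^ 2 = 0 := by
      rcases div_eq_zero_iff.mp heq with h | h
      · exact h
      · exact absurd h hden
    have hint : (2 * (k : ℤ) + 1) * (3 * k + 1 - 6 * i) + 6 * (i : ℤ) ^ 2 = 0 := by
      exact_mod_cast hnum
    have hkey : 3 * (2 * (k : ℤ) + 1) = (6 * k + 3 - 6 * i) ^ 2 := by
      linear_combination (-6 : ℤ) * hint
    obtain ⟨t, ht⟩ : ∃ t : ℕ, t = k - i + 1 := ⟨_, rfl⟩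
    have hti : (t : ℤ) = (k : ℤ) - i + 1 := by omega
    have hkt : (k : ℤ) = 6 * t ^ 2 - 6 * t + 1 := by
      have h3 : 6 * (k : ℤ) + 3 - 6 * i = 3 * (2 * t - 1) := by omega
      rw [h3] at hkey
      have h66 : 6 * (k : ℤ) = 6 * (6 * (t : ℤ) ^ 2 - 6 * t + 1) := by
        linear_combination hkey
      linarith
    have ht2 : 2 ≤ t := by
      by_contra h
      push_neg at h
      have ht1 : t = 1 := by omega
      rw [ht1] at hkt
      norm_num at hkt
      omega
    refine ⟨t, ht2, ?_⟩
    have h6 : 6 * t ≤ 6 * t ^ 2 := by nlinarith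
    zify [h6]
    linarith [hkt]
  · rintro ⟨t, ht, hkt⟩
    subst hkt
    have h6 : 6 * t ≤ 6 * t ^ 2 := by nlinarith
    have h7 : 7 * t ≤ 6 * t ^ 2 := by nlinarith
    refine ⟨6 * t ^ 2 - 7 * t + 2, ?_, ?_, ?_⟩
    · linarith [Nat.zero_le (6 * t ^ 2 - 7 * t)]
    · zify [h6, h7]
      have : 2 ≤ (t : ℤ) := by exact_mod_cast ht
      linarith
    · rw [div_eq_zero_iff]
      left
      push_cast [h6, h7]
      ring
end

section
/- If p ≥ 5 is prime and f and g are modular forms of weight p-1 on SL_2(ℤ) with p-integral rational q-expansion coefficients satisfying f ≡ g ≡ 1 mod p, then their divisor polynomials agree mod p: F(f, x) ≡ F(g, x) mod p. -/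
open PowerSeries

noncomputable section

/-- The Eisenstein series `E₄ = 1 + 240 Σ σ₃(n) qⁿ` as a formal power series. -/
def E4 : PowerSeries ℚ :=
  PowerSeries.mk fun n => if n = 0 then 1 else 240 * ∑ d ∈ n.divisors, (d : ℚ) ^ 3

/-- The Eisenstein series `E₆ = 1 - 504 Σ σ₅(n) qⁿ` as a formal power series. -/
def E6 : PowerSeries ℚ :=
  PowerSeries.mk fun n => if n = 0 then 1 else -504 * ∑ d ∈ n.divisors, (d : ℚ) ^ 5

/-- The discriminant `Δ = (E₄³ - E₆²)/1728` as a formal power series. -/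
def Δ' : PowerSeries ℚ := (1728 : ℚ)⁻¹ • (E4 ^ 3 - E6 ^ 2)

/-- The form `Ẽ_w` attached to an even weight `w`. -/
def Etilde (w : ℕ) : PowerSeries ℚ :=
  if w % 12 = 0 then 1
  else if w % 12 = 2 then E4 ^ 2 * E6
  else if w % 12 = 4 then E4
  else if w % 12 = 6 then E6
  else if w % 12 = 8 then E4 ^ 2
  else E4 * E6

/-- The polynomial `h_w` attached to an even weight `w`. -/
def hPoly (w : ℕ) : Polynomial ℚ :=
  if w % 12 = 0 then 1
  else if w % 12 = 2 then Polynomial.X ^ 2 * (Polynomial.X - 1728)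
  else if w % 12 = 4 then Polynomial.X
  else if w % 12 = 6 then Polynomial.X - 1728
  else if w % 12 = 8 then Polynomial.X ^ 2
  else Polynomial.X * (Polynomial.X - 1728)

/-- `m` in the decomposition `w = 12m + s`, `s ∈ {0,4,6,8,10,14}`. -/
def mOf (w : ℕ) : ℕ := if w % 12 = 2 then w / 12 - 1 else w / 12

/-- The modular form of weight `w` whose divisor polynomial data is the
polynomial `A`: namely `Δ^m · Ẽ_w · Ã(j)`, written as the power series
`Σ_i A_i · E₄^{3i} · Δ^{m-i} · Ẽ_w` (since `jⁱ Δ^m = E₄^{3i} Δ^{m-i}`). -/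
def formOf (w : ℕ) (A : Polynomial ℚ) : PowerSeries ℚ :=
  ∑ i ∈ Finset.range (mOf w + 1), A.coeff i • (E4 ^ (3 * i) * Δ' ^ (mOf w - i) * Etilde w)

/-- `x ∈ ℚ` is `p`-integral and divisible by `p`: `x = p·(a/b)` with `p ∤ b`. -/
def PDvd (p : ℕ) (x : ℚ) : Prop :=
  ∃ a b : ℤ, ¬ ((p : ℤ) ∣ b) ∧ x * (b : ℚ) = (p : ℚ) * (a : ℚ)

/-!
Put `C = A - B` and `m = mOf (p - 1)`. Since `formOf` is linear, every `q`-coefficient of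
`formOf (p - 1) C = Σ_{i ≤ m} C_i E₄^{3i} Δ^{m-i} Ẽ_{p-1}` is divisible by `p`. Because
`Δ = q + O(q²)` and `E₄, Ẽ_{p-1}` have constant term `1`, the `i`-th basis form is
`q^{m-i} + O(q^{m-i+1})`, and its coefficients are `p`-integral as `1728` is a `p`-adic unit for
`p ≥ 5`. The `q^{m-i}`-coefficient therefore expresses `C_i` through `p`-divisible quantities
and the `C_{i'}` with `i' > i`, so by downward induction `C ≡ 0 (mod p)`, hence also
`h_{p-1} C ≡ 0`, since `h_{p-1}` has integer coefficients.
-/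

section

variable {p : ℕ} [Fact p.Prime]

theorem pDvd_iff_padicNorm_lt_one {x : ℚ} : PDvd p x ↔ padicNorm p x < 1 := by
  have hp := Fact.out (p := p.Prime)
  constructor
  · rintro ⟨a, b, hb, hx⟩
    have hnorm := congrArg (padicNorm p) hx
    rw [padicNorm.mul, padicNorm.mul, (padicNorm.int_eq_one_iff b).2 hb, mul_one] at hnorm
    rw [hnorm]
    exact mul_lt_one_of_nonneg_of_lt_one_left (padicNorm.nonneg _)
      padicNorm.padicNorm_p_lt_one_of_prime (padicNorm.of_int a)
  · intro hx
    have hnum : (p : ℤ) ∣ x.num := by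
      rw [← padicNorm.int_lt_one_iff, ← Rat.mul_den_eq_num, padicNorm.mul]
      exact mul_lt_one_of_nonneg_of_lt_one_left (padicNorm.nonneg _) hx (padicNorm.of_nat _)
    obtain ⟨a, ha⟩ := hnum
    refine ⟨a, x.den, fun hden => hp.one_lt.ne' ?_, ?_⟩
    · exact Nat.eq_one_of_dvd_coprimes x.reduced (Int.natCast_dvd.1 ⟨a, ha⟩)
        (Int.natCast_dvd_natCast.1 hden)
    · rw [Int.cast_natCast, Rat.mul_den_eq_num, ha]
      push_cast
      ring

def pIntegers (p : ℕ) [Fact p.Prime] : Subring ℚ :=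
  (PadicInt.subring p).comap (Rat.castHom ℚ_[p])

theorem mem_pIntegers {x : ℚ} : x ∈ pIntegers p ↔ padicNorm p x ≤ 1 := by
  simp only [pIntegers, Subring.mem_comap, eq_ratCast, PadicInt.mem_subring_iff,
    Padic.eq_padicNorm]
  norm_cast

theorem inv_1728_mem_pIntegers (hp5 : 5 ≤ p) : (1728 : ℚ)⁻¹ ∈ pIntegers p := by
  have hp := Fact.out (p := p.Prime)
  have h1728 : ¬ p ∣ 2 ^ 6 * 3 ^ 3 := fun h => by
    rcases hp.dvd_mul.1 h with h | h <;>
      have := Nat.le_of_dvd (by norm_num) (hp.dvd_of_dvd_pow h) <;> omega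
  rw [mem_pIntegers, inv_eq_one_div, padicNorm.div, padicNorm.one,
    show (1728 : ℚ) = ((2 ^ 6 * 3 ^ 3 : ℕ) : ℚ) by norm_num,
    (padicNorm.nat_eq_one_iff _).2 h1728, div_one]

def integralPowerSeries (p : ℕ) [Fact p.Prime] : Subring (PowerSeries ℚ) :=
  (PowerSeries.map (pIntegers p).subtype).range

theorem mem_integralPowerSeries {f : PowerSeries ℚ} :
    f ∈ integralPowerSeries p ↔ ∀ n, coeff n f ∈ pIntegers p := by
  constructor
  · rintro ⟨g, rfl⟩ n
    simp
  · intro hf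
    exact ⟨PowerSeries.mk fun n => ⟨coeff n f, hf n⟩, by ext n; simp⟩

def integralPolynomials (p : ℕ) [Fact p.Prime] : Subring (Polynomial ℚ) :=
  Polynomial.liftsRing (pIntegers p).subtype

theorem mem_integralPolynomials {f : Polynomial ℚ} :
    f ∈ integralPolynomials p ↔ ∀ n, f.coeff n ∈ pIntegers p := by
  simp [integralPolynomials, ← Polynomial.lifts_iff_liftsRing, Polynomial.lifts_iff_coeff_lifts]

theorem padicNorm_coeff_mul_lt_one {h C : Polynomial ℚ} (hh : h ∈ integralPolynomials p)
    (hC : ∀ j, padicNorm p (C.coeff j) < 1) (i : ℕ) : padicNorm p ((h * C).coeff i) < 1 := by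
  rw [Polynomial.coeff_mul]
  refine padicNorm.sum_lt' (fun ab _ => ?_) one_pos
  rw [padicNorm.mul]
  exact mul_lt_one_of_nonneg_of_lt_one_right
    (mem_pIntegers.1 (mem_integralPolynomials.1 hh ab.1)) (padicNorm.nonneg _) (hC ab.2)

theorem padicNorm_lt_one_of_antidiagonal_unitriangular {m : ℕ} (c : ℕ → ℚ) (t : ℕ → ℕ → ℚ)
    (ht : ∀ j n, padicNorm p (t j n) ≤ 1) (ht0 : ∀ j n, n + j < m → t j n = 0)
    (ht1 : ∀ j ≤ m, t j (m - j) = 1)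
    (hc : ∀ n, padicNorm p (∑ j ∈ Finset.range (m + 1), c j * t j n) < 1) :
    ∀ j ≤ m, padicNorm p (c j) < 1 := by
  intro j hj
  induction hk : m - j using Nat.strong_induction_on generalizing j with
  | _ k ih =>
    have hjmem : j ∈ Finset.range (m + 1) := Finset.mem_range.2 (by omega)
    have hrest : padicNorm p (∑ i ∈ (Finset.range (m + 1)).erase j, c i * t i k) < 1 := by
      refine padicNorm.sum_lt' (fun i hi => ?_) one_pos
      obtain ⟨hij, him⟩ := Finset.mem_erase.1 hi
      rw [Finset.mem_range] at him
      rcases lt_or_gt_of_ne hij with hlt | hgt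
      · rw [ht0 i k (by omega), mul_zero, padicNorm.zero]
        exact one_pos
      · rw [padicNorm.mul]
        exact mul_lt_one_of_nonneg_of_lt_one_left (padicNorm.nonneg _)
          (ih (m - i) (by omega) i (by omega) rfl) (ht i k)
    have hsplit := Finset.add_sum_erase _ (fun i => c i * t i k) hjmem
    rw [← hk, ht1 j hj, mul_one, hk] at hsplit
    rw [← add_sub_cancel_right (c j) (∑ i ∈ (Finset.range (m + 1)).erase j, c i * t i k), hsplit]
    exact lt_of_le_of_lt padicNorm.sub (max_lt (hc k) hrest)

theorem constantCoeff_E4 : constantCoeff E4 = 1 := by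
  rw [← coeff_zero_eq_constantCoeff_apply, E4, coeff_mk, if_pos rfl]

theorem constantCoeff_E6 : constantCoeff E6 = 1 := by
  rw [← coeff_zero_eq_constantCoeff_apply, E6, coeff_mk, if_pos rfl]

theorem coeff_one_E4 : coeff 1 E4 = 240 := by simp [E4]

theorem coeff_one_E6 : coeff 1 E6 = -504 := by simp [E6]

theorem constantCoeff_Δ' : constantCoeff Δ' = 0 := by
  simp [Δ', constantCoeff_E4, constantCoeff_E6]

theorem coeff_one_Δ' : coeff 1 Δ' = 1 := by
  norm_num [Δ', coeff_one_pow, coeff_one_E4, coeff_one_E6, constantCoeff_E4, constantCoeff_E6]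

theorem constantCoeff_Etilde (w : ℕ) : constantCoeff (Etilde w) = 1 := by
  unfold Etilde
  split_ifs <;> simp [constantCoeff_E4, constantCoeff_E6]

theorem exists_Δ'_eq_X_mul : ∃ D, Δ' = X * D ∧ constantCoeff D = 1 := by
  obtain ⟨D, hD⟩ := X_dvd_iff.2 constantCoeff_Δ'
  refine ⟨D, hD, ?_⟩
  rw [← coeff_zero_eq_constantCoeff_apply, ← coeff_succ_X_mul, ← hD, coeff_one_Δ']

def formBasis (w i : ℕ) : PowerSeries ℚ := E4 ^ (3 * i) * Δ' ^ (mOf w - i) * Etilde w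

theorem coeff_formOf (w : ℕ) (A : Polynomial ℚ) (n : ℕ) :
    coeff n (formOf w A) =
      ∑ i ∈ Finset.range (mOf w + 1), A.coeff i * coeff n (formBasis w i) := by
  simp only [formOf, map_sum, coeff_smul, smul_eq_mul, formBasis]

theorem formOf_sub (w : ℕ) (A B : Polynomial ℚ) :
    formOf w (A - B) = formOf w A - formOf w B := by
  simp only [formOf, Polynomial.coeff_sub, sub_smul, Finset.sum_sub_distrib]

theorem exists_formBasis_eq_X_pow_mul (w i : ℕ) :
    ∃ U, formBasis w i = X ^ (mOf w - i) * U ∧ constantCoeff U = 1 := by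
  obtain ⟨D, hΔ', hD⟩ := exists_Δ'_eq_X_mul
  refine ⟨E4 ^ (3 * i) * D ^ (mOf w - i) * Etilde w, by rw [formBasis, hΔ']; ring, ?_⟩
  simp [constantCoeff_E4, constantCoeff_Etilde, hD]

theorem coeff_formBasis_of_lt {w i n : ℕ} (h : n + i < mOf w) :
    coeff n (formBasis w i) = 0 := by
  obtain ⟨U, hU, -⟩ := exists_formBasis_eq_X_pow_mul w i
  rw [hU, coeff_X_pow_mul', if_neg (by omega)]

theorem coeff_formBasis_self (w i : ℕ) : coeff (mOf w - i) (formBasis w i) = 1 := by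
  obtain ⟨U, hU, hU1⟩ := exists_formBasis_eq_X_pow_mul w i
  rw [hU, coeff_X_pow_mul', if_pos le_rfl, Nat.sub_self, coeff_zero_eq_constantCoeff_apply, hU1]

theorem E4_mem_integralPowerSeries : E4 ∈ integralPowerSeries p := by
  refine mem_integralPowerSeries.2 fun n => ?_
  rw [E4, coeff_mk]
  split_ifs
  · exact one_mem _
  · exact mul_mem (by simp) (sum_mem fun d _ => pow_mem (natCast_mem _ d) 3)

theorem E6_mem_integralPowerSeries : E6 ∈ integralPowerSeries p := by
  refine mem_integralPowerSeries.2 fun n => ?_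
  rw [E6, coeff_mk]
  split_ifs
  · exact one_mem _
  · exact mul_mem (by simp) (sum_mem fun d _ => pow_mem (natCast_mem _ d) 5)

theorem Etilde_mem_integralPowerSeries (w : ℕ) : Etilde w ∈ integralPowerSeries p := by
  have h4 := E4_mem_integralPowerSeries (p := p)
  have h6 := E6_mem_integralPowerSeries (p := p)
  unfold Etilde
  split_ifs
  exacts [one_mem _, mul_mem (pow_mem h4 2) h6, h4, h6, pow_mem h4 2, mul_mem h4 h6]

theorem Δ'_mem_integralPowerSeries (hp5 : 5 ≤ p) : Δ' ∈ integralPowerSeries p := by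
  have hdiff : E4 ^ 3 - E6 ^ 2 ∈ integralPowerSeries p :=
    sub_mem (pow_mem E4_mem_integralPowerSeries 3) (pow_mem E6_mem_integralPowerSeries 2)
  refine mem_integralPowerSeries.2 fun n => ?_
  rw [Δ', coeff_smul, smul_eq_mul]
  exact mul_mem (inv_1728_mem_pIntegers hp5) (mem_integralPowerSeries.1 hdiff n)

theorem formBasis_mem_integralPowerSeries (hp5 : 5 ≤ p) (w i : ℕ) :
    formBasis w i ∈ integralPowerSeries p :=
  mul_mem (mul_mem (pow_mem E4_mem_integralPowerSeries _)
    (pow_mem (Δ'_mem_integralPowerSeries hp5) _)) (Etilde_mem_integralPowerSeries w)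

theorem hPoly_mem_integralPolynomials (w : ℕ) : hPoly w ∈ integralPolynomials p := by
  have hX : (Polynomial.X : Polynomial ℚ) ∈ integralPolynomials p :=
    (Polynomial.lifts_iff_liftsRing _ _).1 (Polynomial.X_mem_lifts _)
  have hX1728 : (Polynomial.X - 1728 : Polynomial ℚ) ∈ integralPolynomials p :=
    sub_mem hX (by exact_mod_cast natCast_mem (integralPolynomials p) 1728)
  unfold hPoly
  split_ifs
  exacts [one_mem _, mul_mem (pow_mem hX 2) hX1728, hX, hX1728, pow_mem hX 2, mul_mem hX hX1728]

theorem padicNorm_coeff_lt_one_of_formOf (hp5 : 5 ≤ p) {w : ℕ} {C : Polynomial ℚ}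
    (hC : C.natDegree ≤ mOf w) (hform : ∀ n, padicNorm p (coeff n (formOf w C)) < 1) (j : ℕ) :
    padicNorm p (C.coeff j) < 1 := by
  by_cases hj : j ≤ mOf w
  · refine padicNorm_lt_one_of_antidiagonal_unitriangular C.coeff
      (fun i n => coeff n (formBasis w i))
      (fun i n => mem_pIntegers.1
        (mem_integralPowerSeries.1 (formBasis_mem_integralPowerSeries hp5 w i) n))
      (fun _ _ => coeff_formBasis_of_lt) (fun i _ => coeff_formBasis_self w i)
      (fun n => coeff_formOf w C n ▸ hform n) j hj
  · rw [Polynomial.coeff_eq_zero_of_natDegree_lt (by omega), padicNorm.zero]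
    exact one_pos

end

/-- If `p ≥ 5` is prime and `f, g` are modular forms of weight `p - 1` on
`SL₂(ℤ)` (written via their divisor-polynomial decompositions
`f = Δ^m Ẽ_{p-1} Ã(j)`, `g = Δ^m Ẽ_{p-1} B̃(j)` with `deg Ã, deg B̃ ≤ m`) whose
`q`-expansions have `p`-integral coefficients and satisfy `f ≡ g ≡ 1 (mod p)`,
then their divisor polynomials `F(f,x) = h_{p-1}(x)Ã(x)` and
`F(g,x) = h_{p-1}(x)B̃(x)` are congruent modulo `p`. -/
theorem divisor_polynomials_congruent (p : ℕ) (hp : p.Prime) (hp5 : 5 ≤ p)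
    (A B : Polynomial ℚ)
    (hA : A.natDegree ≤ mOf (p - 1)) (hB : B.natDegree ≤ mOf (p - 1))
    (hfA : ∀ n : ℕ, PDvd p ((coeff n) (formOf (p - 1) A) - if n = 0 then 1 else 0))
    (hfB : ∀ n : ℕ, PDvd p ((coeff n) (formOf (p - 1) B) - if n = 0 then 1 else 0)) :
    ∀ i : ℕ, PDvd p ((hPoly (p - 1) * A - hPoly (p - 1) * B).coeff i) := by
  have := Fact.mk hp
  have hdeg : (A - B).natDegree ≤ mOf (p - 1) :=
    (Polynomial.natDegree_sub_le A B).trans (max_le hA hB)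
  have hform : ∀ n, padicNorm p (coeff n (formOf (p - 1) (A - B))) < 1 := fun n => by
    have h := lt_of_le_of_lt padicNorm.sub
      (max_lt (pDvd_iff_padicNorm_lt_one.1 (hfA n)) (pDvd_iff_padicNorm_lt_one.1 (hfB n)))
    rwa [sub_sub_sub_cancel_right, ← map_sub, ← formOf_sub] at h
  intro i
  rw [← mul_sub, pDvd_iff_padicNorm_lt_one]
  exact padicNorm_coeff_mul_lt_one (hPoly_mem_integralPolynomials _)
    (padicNorm_coeff_lt_one_of_formOf hp5 hdeg hform) i
end
end
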